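/- arXiv:math/0611370 — 3 statements merged into one kernel-verified Lean document; each statement's English description precedes it below -/
import Mathlib

section
/- Let R : [0,∞)² → [0,∞) satisfy 0 ≤ R(x,y) ≤ x ∧ y and monotonicity in each variable, and fix 0 ≤ η < 1/2. For 0 < u ≤ x, 0 < v ≤ y define d²((x,y),(u,v)) = R(x,y)/(x∨y)^{2η} − 2R(u,v)/((x∨y)^η (u∨v)^η) + R(u,v)/(u∨v)^{2η}. Then if x ≥ y, u ≥ v, x ≥ u, y ≥ v, |x−u| ≤ δ, |y−v| ≤ δ and u ≤ δ, we have d²((x,y),(u,v)) ≤ 5·δ^{1−2η}. -/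
open Real

theorem stmt4 (R : ℝ → ℝ → ℝ)
    (hR0 : ∀ x y : ℝ, 0 ≤ x → 0 ≤ y → 0 ≤ R x y ∧ R x y ≤ min x y)
    (hRmono : ∀ x x' y y' : ℝ, 0 ≤ x → x ≤ x' → 0 ≤ y → y ≤ y' → R x y ≤ R x' y')
    (η : ℝ) (hη0 : 0 ≤ η) (hη : η < 1/2)
    (δ x y u v : ℝ) (hδ : 0 < δ)
    (hv : 0 < v) (hyx : y ≤ x) (hvu : v ≤ u) (hux : u ≤ x) (hvy : v ≤ y)
    (hxu : |x - u| ≤ δ) (hyv : |y - v| ≤ δ) (huδ : u ≤ δ) :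
    R x y / (max x y) ^ (2 * η) - 2 * R u v / ((max x y) ^ η * (max u v) ^ η)
      + R u v / (max u v) ^ (2 * η) ≤ 5 * δ ^ (1 - 2 * η) := by
  have hu : 0 < u := lt_of_lt_of_le hv hvu
  have hx : 0 < x := lt_of_lt_of_le hu hux
  have hy : 0 < y := lt_of_lt_of_le hv hvy
  rw [max_eq_left hyx, max_eq_left hvu]
  have hRxy := hR0 x y hx.le hy.le
  have hRuv := hR0 u v hu.le hv.le
  have hRxy' : R x y ≤ x := hRxy.2.trans ((min_le_right _ _).trans hyx)
  have hRuv' : R u v ≤ u := hRuv.2.trans ((min_le_right _ _).trans hvu)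
  have hp : (0:ℝ) ≤ 1 - 2 * η := by linarith
  have hx2δ : x ≤ 2 * δ := by
    have := (abs_le.mp hxu).2
    linarith
  -- middle term is nonneg
  have hmid : 0 ≤ 2 * R u v / (x ^ η * u ^ η) := by
    apply div_nonneg (by linarith [hRuv.1])
    exact mul_nonneg (rpow_nonneg hx.le _) (rpow_nonneg hu.le _)
  -- first term bound
  have h1 : R x y / x ^ (2 * η) ≤ 2 * δ ^ (1 - 2 * η) := by
    have hb : R x y / x ^ (2 * η) ≤ x ^ (1 - 2 * η) := by
      rw [rpow_sub hx, rpow_one]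
      gcongr
    have hc : x ^ (1 - 2 * η) ≤ (2 * δ) ^ (1 - 2 * η) :=
      rpow_le_rpow hx.le hx2δ hp
    have hd : (2 * δ) ^ (1 - 2 * η) = 2 ^ (1 - 2 * η) * δ ^ (1 - 2 * η) :=
      mul_rpow (by norm_num) hδ.le
    have he : (2:ℝ) ^ (1 - 2 * η) ≤ 2 := by
      calc (2:ℝ) ^ (1 - 2 * η) ≤ 2 ^ (1:ℝ) :=
            rpow_le_rpow_of_exponent_le (by norm_num) (by linarith)
        _ = 2 := rpow_one 2
    have hδp : 0 ≤ δ ^ (1 - 2 * η) := rpow_nonneg hδ.le _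
    calc R x y / x ^ (2 * η) ≤ (2 * δ) ^ (1 - 2 * η) := hb.trans hc
      _ = 2 ^ (1 - 2 * η) * δ ^ (1 - 2 * η) := hd
      _ ≤ 2 * δ ^ (1 - 2 * η) := mul_le_mul_of_nonneg_right he hδp
  -- third term bound
  have h3 : R u v / u ^ (2 * η) ≤ δ ^ (1 - 2 * η) := by
    have hb : R u v / u ^ (2 * η) ≤ u ^ (1 - 2 * η) := by
      rw [rpow_sub hu, rpow_one]
      gcongr
    exact hb.trans (rpow_le_rpow hu.le huδ hp)
  have hδp : 0 ≤ δ ^ (1 - 2 * η) := rpow_nonneg hδ.le _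
  linarith
end

section
/- Let R : [0,∞)² → [0,∞) satisfy R nondecreasing in each variable, R(x,y) ≤ x∧y, and R(x,y) ≤ R(u,v) + 2δ whenever |x−u| ≤ δ and |y−v| ≤ δ (u ≤ x, v ≤ y). Fix 0 ≤ η < 1/2 and δ ∈ (0,1]. If x ≥ y, u ≥ v, x ≥ u ≥ δ, y ≥ v, |x−u| ≤ δ, |y−v| ≤ δ, then R(u,v)(u^η − x^η)²/(xu)^{2η} + 2δ·u^{2η}/(xu)^{2η} ≤ 3δ^{1−2η}. -/
open Real

theorem stmt5 (R : ℝ → ℝ → ℝ)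
    (hRmono : ∀ x x' y y' : ℝ, x ≤ x' → y ≤ y' → R x y ≤ R x' y')
    (hRle : ∀ x y : ℝ, R x y ≤ min x y)
    (hRδ : ∀ δ' x y u v : ℝ, 0 < δ' → u ≤ x → v ≤ y → |x - u| ≤ δ' → |y - v| ≤ δ' →
      R x y ≤ R u v + 2 * δ')
    (η δ x y u v : ℝ) (hη0 : 0 ≤ η) (hη : η < 1/2) (hδ0 : 0 < δ) (hδ1 : δ ≤ 1)
    (h1 : y ≤ x) (h2 : v ≤ u) (h3 : u ≤ x) (h4 : δ ≤ u) (h5 : v ≤ y)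
    (h6 : |x - u| ≤ δ) (h7 : |y - v| ≤ δ) (hv : 0 < v) :
    R u v * (u ^ η - x ^ η) ^ 2 / (x * u) ^ (2 * η)
      + 2 * δ * u ^ (2 * η) / (x * u) ^ (2 * η) ≤ 3 * δ ^ (1 - 2 * η) := by
  have hu : 0 < u := lt_of_lt_of_le hδ0 h4
  have hx : 0 < x := lt_of_lt_of_le hu h3
  have hxu : (x * u) ^ (2 * η) = x ^ (2 * η) * u ^ (2 * η) := mul_rpow hx.le hu.le
  have hX : 0 < x ^ (2 * η) := rpow_pos_of_pos hx _
  have hU : 0 < u ^ (2 * η) := rpow_pos_of_pos hu _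
  have hD' : 0 < δ ^ (1 - 2 * η) := rpow_pos_of_pos hδ0 _
  have hDX : δ ^ (2 * η) ≤ x ^ (2 * η) :=
    rpow_le_rpow hδ0.le (h4.trans h3) (by positivity)
  have hexp : δ ^ (1 - 2 * η) * δ ^ (2 * η) = δ := by
    rw [← rpow_add hδ0]; norm_num
  have huu : u ^ η * u ^ η = u ^ (2 * η) := by
    rw [← rpow_add hu]; ring_nf
  have hmono : u ^ η ≤ x ^ η := rpow_le_rpow hu.le h3 hη0
  -- cross inequality : x^η * u ≤ u^η * x
  have hcross : x ^ η * u ≤ u ^ η * x := by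
    have h1' : (1:ℝ) ≤ x / u := (one_le_div hu).mpr h3
    have h := rpow_le_rpow_of_exponent_le h1' (show η ≤ (1:ℝ) by linarith)
    rw [rpow_one, div_rpow hx.le hu.le, div_le_div_iff₀ (rpow_pos_of_pos hu η) hu] at h
    linarith
  have hxud : x - u ≤ δ := by
    have := abs_le.mp h6
    linarith [this.2]
  have hxu0 : 0 ≤ x - u := by linarith
  -- squared bound
  have hsq : (u ^ η - x ^ η) ^ 2 * u ^ 2 ≤ u ^ (2 * η) * δ ^ 2 := by
    have hkey : u * (x ^ η - u ^ η) ≤ u ^ η * (x - u) := by nlinarith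
    have hk0 : 0 ≤ u * (x ^ η - u ^ η) := by nlinarith
    have hk1 : 0 ≤ u ^ η * (x - u) := by positivity
    nlinarith [mul_le_mul hkey hkey hk0 hk1, sq_nonneg (u ^ η),
      mul_le_mul hxud hxud hxu0 hδ0.le]
  have hRu : R u v ≤ u := (hRle u v).trans (min_le_left _ _)
  have hA : R u v * (u ^ η - x ^ η) ^ 2 ≤ u ^ (2 * η) * δ := by
    have hu2 : (0:ℝ) < u ^ 2 := by positivity
    refine le_of_mul_le_mul_right ?_ hu2
    have hsqn : 0 ≤ (u ^ η - x ^ η) ^ 2 * u ^ 2 := by positivity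
    have s1 : R u v * ((u ^ η - x ^ η) ^ 2 * u ^ 2) ≤ u * ((u ^ η - x ^ η) ^ 2 * u ^ 2) :=
      mul_le_mul_of_nonneg_right hRu hsqn
    have s2 : u * ((u ^ η - x ^ η) ^ 2 * u ^ 2) ≤ u * (u ^ (2 * η) * δ ^ 2) :=
      mul_le_mul_of_nonneg_left hsq hu.le
    have s3 : u ^ (2 * η) * δ * u * δ ≤ u ^ (2 * η) * δ * u * u :=
      mul_le_mul_of_nonneg_left h4 (by positivity)
    linarith [s1, s2, s3]
  have f1 : δ ^ (2 * η) * (δ ^ (1 - 2 * η) * u ^ (2 * η))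
      ≤ x ^ (2 * η) * (δ ^ (1 - 2 * η) * u ^ (2 * η)) :=
    mul_le_mul_of_nonneg_right hDX (by positivity)
  have hexpU : δ * u ^ (2 * η) = δ ^ (1 - 2 * η) * δ ^ (2 * η) * u ^ (2 * η) := by
    rw [hexp]
  rw [hxu, ← add_div, div_le_iff₀ (by positivity)]
  linarith [hA, f1, hexpU]
end

section
/- Let C : [0,1]² → [0,1] be a bivariate copula (so C(x,y) ≤ x ∧ y), let k,n ∈ ℕ with k ≤ n, λ > 0 and 0 < η < 1/2. Then (n/√k)·∫₀^{(√k λ)^{−1/η}} x^{−η} d(C(kx/n, kx/n)) ≤ (1/(1−η))·λ^{1−1/η}·k^{1−1/(2η)}. In particular, this quantity tends to 0 as k → ∞. -/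
open Real MeasureTheory Set Filter

theorem stmt6 (C : ℝ → ℝ → ℝ) (hC0 : ∀ u v : ℝ, 0 ≤ u → 0 ≤ v → 0 ≤ C u v)
    (hC : ∀ u v : ℝ, 0 ≤ u → 0 ≤ v → C u v ≤ min u v)
    (lam η : ℝ) (hlam : 0 < lam) (hη0 : 0 < η) (hη : η < 1/2)
    (g : ℕ → ℕ → StieltjesFunction ℝ)
    (hg : ∀ k n : ℕ, ∀ x : ℝ, g k n x = C ((k : ℝ) * x / n) ((k : ℝ) * x / n)) :
    (∀ k n : ℕ, 1 ≤ k → k ≤ n →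
      ((n : ℝ) / Real.sqrt k) *
          ∫ x in Set.Ioc (0 : ℝ) ((Real.sqrt k * lam) ^ (-1/η)), x ^ (-η) ∂(g k n).measure
        ≤ (1 / (1 - η)) * lam ^ (1 - 1/η) * (k : ℝ) ^ (1 - 1/(2*η))) ∧
    Filter.Tendsto (fun k : ℕ => (1 / (1 - η)) * lam ^ (1 - 1/η) * (k : ℝ) ^ (1 - 1/(2*η)))
      Filter.atTop (nhds 0) := by
  have hη1 : (0:ℝ) < 1 - η := by linarith
  have hηne : η ≠ 0 := ne_of_gt hη0
  have fmeas : Measurable (fun x : ℝ => x ^ (-η)) := by fun_prop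
  constructor
  · intro k n hk hkn
    have hk0 : (0:ℝ) < k := by exact_mod_cast hk
    have hn0 : (0:ℝ) < n := lt_of_lt_of_le hk0 (by exact_mod_cast hkn)
    have hsk : (0:ℝ) < Real.sqrt k := Real.sqrt_pos.mpr hk0
    set T : ℝ := (Real.sqrt k * lam) ^ (-1/η) with hT
    have hskl : (0:ℝ) < Real.sqrt k * lam := mul_pos hsk hlam
    have hT0 : 0 < T := Real.rpow_pos_of_pos hskl _
    set μ := (g k n).measure with hμ
    -- g k n 0 = 0 and g k n s ≤ k s / n for s ≥ 0
    have hg0 : g k n 0 = 0 := by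
      rw [hg]
      have h1 : (k:ℝ) * 0 / n = 0 := by ring
      rw [h1]
      exact le_antisymm (by simpa using hC 0 0 le_rfl le_rfl) (hC0 0 0 le_rfl le_rfl)
    have hgle : ∀ s : ℝ, 0 ≤ s → g k n s ≤ (k:ℝ) * s / n := by
      intro s hs
      rw [hg]
      have hpos : 0 ≤ (k:ℝ) * s / n := by positivity
      simpa [min_self] using hC ((k:ℝ) * s / n) ((k:ℝ) * s / n) hpos hpos
    -- measure bound
    have hμIoc : ∀ m : ℝ, 0 ≤ m → μ (Ioc 0 m) ≤ ENNReal.ofReal ((k:ℝ)/n) * ENNReal.ofReal m := by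
      intro m hm
      rw [hμ, StieltjesFunction.measure_Ioc, hg0, sub_zero,
        ← ENNReal.ofReal_mul (by positivity)]
      exact ENNReal.ofReal_le_ofReal (by
        calc g k n m ≤ (k:ℝ) * m / n := hgle m hm
          _ = (k:ℝ)/n * m := by ring)
    -- nonnegativity a.e.
    have fnn : ∀ᵐ x ∂(μ.restrict (Ioc 0 T)), 0 ≤ x ^ (-η) := by
      filter_upwards [ae_restrict_mem measurableSet_Ioc] with x hx
      exact Real.rpow_nonneg hx.1.le _
    have fnnv : ∀ᵐ x ∂(volume.restrict (Ioc 0 T)), 0 ≤ x ^ (-η) := by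
      filter_upwards [ae_restrict_mem measurableSet_Ioc] with x hx
      exact Real.rpow_nonneg hx.1.le _
    -- layer cake for μ
    have lc1 := lintegral_eq_lintegral_meas_lt (μ.restrict (Ioc 0 T)) fnn
      fmeas.aemeasurable
    have lc2 := lintegral_eq_lintegral_meas_lt (volume.restrict (Ioc 0 T)) fnnv
      fmeas.aemeasurable
    -- key pointwise bound on superlevel measures
    have key : ∀ t : ℝ, 0 < t →
        (μ.restrict (Ioc 0 T)) {a | t < a ^ (-η)}
          ≤ ENNReal.ofReal ((k:ℝ)/n) * (volume.restrict (Ioc 0 T)) {a | t < a ^ (-η)} := by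
      intro t ht
      have hSm : MeasurableSet {a : ℝ | t < a ^ (-η)} :=
        measurableSet_lt measurable_const fmeas
      set s : ℝ := t ^ (-1/η) with hs
      have hs0 : 0 < s := Real.rpow_pos_of_pos ht _
      have hiff : ∀ x : ℝ, 0 < x → (t < x ^ (-η) ↔ x < s) := by
        intro x hx
        have hne : -η < 0 := neg_lt_zero.mpr hη0
        have hmul : -1/η * -η = 1 := by field_simp
        have hts : t = s ^ (-η) := by
          rw [hs, ← Real.rpow_mul ht.le, hmul, Real.rpow_one]
        rw [hts]
        exact Real.rpow_lt_rpow_iff_of_neg hs0 hx hne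
      set m : ℝ := min s T with hm
      have hm0 : 0 < m := lt_min hs0 hT0
      -- upper bound for μ side
      have hsub1 : {a : ℝ | t < a ^ (-η)} ∩ Ioc 0 T ⊆ Ioc 0 m := by
        rintro x ⟨hx1, hx2, hx3⟩
        exact ⟨hx2, le_min (((hiff x hx2).mp hx1).le) hx3⟩
      -- lower bound for volume side
      have hsub2 : Ioo 0 m ⊆ {a : ℝ | t < a ^ (-η)} ∩ Ioc 0 T := by
        rintro x ⟨hx1, hx2⟩
        exact ⟨(hiff x hx1).mpr (lt_of_lt_of_le hx2 (min_le_left _ _)),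
          hx1, le_trans hx2.le (min_le_right _ _)⟩
      rw [Measure.restrict_apply hSm, Measure.restrict_apply hSm]
      calc μ ({a : ℝ | t < a ^ (-η)} ∩ Ioc 0 T)
          ≤ μ (Ioc 0 m) := measure_mono hsub1
        _ ≤ ENNReal.ofReal ((k:ℝ)/n) * ENNReal.ofReal m := hμIoc m hm0.le
        _ = ENNReal.ofReal ((k:ℝ)/n) * volume (Ioo 0 m) := by
            rw [Real.volume_Ioo, sub_zero]
        _ ≤ ENNReal.ofReal ((k:ℝ)/n) * volume ({a : ℝ | t < a ^ (-η)} ∩ Ioc 0 T) :=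
            mul_le_mul_right (measure_mono hsub2) _
    -- combine
    have hcomp : ∫⁻ x in Ioc 0 T, ENNReal.ofReal (x ^ (-η)) ∂μ
        ≤ ENNReal.ofReal ((k:ℝ)/n) * ∫⁻ x in Ioc 0 T, ENNReal.ofReal (x ^ (-η)) := by
      rw [lc1, lc2, ← lintegral_const_mul' _ _ ENNReal.ofReal_ne_top]
      refine lintegral_mono_ae ?_
      filter_upwards [ae_restrict_mem measurableSet_Ioi] with t ht
      exact key t ht
    -- value of the Lebesgue integral
    have hint : IntegrableOn (fun x : ℝ => x ^ (-η)) (Ioc 0 T) := by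
      have := (intervalIntegral.intervalIntegrable_rpow' (r := -η) (a := 0) (b := T)
        (by linarith))
      exact this.1
    have hval : ∫ x in Ioc 0 T, x ^ (-η) = T ^ (1 - η) / (1 - η) := by
      rw [← intervalIntegral.integral_of_le hT0.le,
        integral_rpow (Or.inl (by linarith))]
      rw [Real.zero_rpow (by linarith), show -η + 1 = 1 - η from by ring, sub_zero]
    have hlint : ∫⁻ x in Ioc 0 T, ENNReal.ofReal (x ^ (-η))
        = ENNReal.ofReal (T ^ (1 - η) / (1 - η)) := by
      rw [← ofReal_integral_eq_lintegral_ofReal hint fnnv, hval]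
    -- Bochner integral ≤ bound
    have hIb : ∫ x in Ioc 0 T, x ^ (-η) ∂μ
        ≤ (k:ℝ)/n * (T ^ (1 - η) / (1 - η)) := by
      rw [integral_eq_lintegral_of_nonneg_ae fnn fmeas.aestronglyMeasurable]
      refine ENNReal.toReal_le_of_le_ofReal (by positivity) ?_
      calc ∫⁻ x in Ioc 0 T, ENNReal.ofReal (x ^ (-η)) ∂μ
          ≤ ENNReal.ofReal ((k:ℝ)/n) * ∫⁻ x in Ioc 0 T, ENNReal.ofReal (x ^ (-η)) := hcomp
        _ = ENNReal.ofReal ((k:ℝ)/n * (T ^ (1 - η) / (1 - η))) := by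
            rw [hlint, ← ENNReal.ofReal_mul (by positivity)]
    -- final arithmetic
    have harr : (n:ℝ) / Real.sqrt k * ((k:ℝ)/n * (T ^ (1 - η) / (1 - η)))
        = (1 / (1 - η)) * lam ^ (1 - 1/η) * (k : ℝ) ^ (1 - 1/(2*η)) := by
      have hT1 : T ^ (1 - η) = (Real.sqrt k) ^ (1 - 1/η) * lam ^ (1 - 1/η) := by
        have he : (-1/η) * (1 - η) = 1 - 1/η := by field_simp; ring
        rw [hT, ← Real.rpow_mul hskl.le, he, Real.mul_rpow hsk.le hlam.le]
      have hsqk : Real.sqrt k = (k:ℝ) ^ (1/2 : ℝ) := Real.sqrt_eq_rpow (k:ℝ)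
      have hkk : (k:ℝ) / Real.sqrt k * (Real.sqrt k) ^ (1 - 1/η)
          = (k:ℝ) ^ (1 - 1/(2*η)) := by
        have h1 : (k:ℝ) / Real.sqrt k = Real.sqrt k := by
          rw [eq_comm, eq_div_iff (ne_of_gt hsk), Real.mul_self_sqrt hk0.le]
        rw [h1, hsqk, ← Real.rpow_one ((k:ℝ) ^ (1/2 : ℝ)), ← Real.rpow_mul hk0.le,
          ← Real.rpow_mul hk0.le, ← Real.rpow_add hk0]
        congr 1
        field_simp
        ring
      rw [hT1]
      have hstep : (n:ℝ) / Real.sqrt k *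
          ((k:ℝ)/n * ((Real.sqrt k) ^ (1 - 1/η) * lam ^ (1 - 1/η) / (1 - η)))
          = ((k:ℝ) / Real.sqrt k * (Real.sqrt k) ^ (1 - 1/η)) * lam ^ (1 - 1/η)
            * (1/(1 - η)) := by
        generalize (Real.sqrt (k:ℝ)) ^ (1 - 1/η) = A
        generalize lam ^ (1 - 1/η) = B
        have h2 : Real.sqrt (k:ℝ) * Real.sqrt (k:ℝ) = (k:ℝ) := Real.mul_self_sqrt hk0.le
        field_simp
      rw [hstep, hkk]
      ring
    calc (n:ℝ) / Real.sqrt k * ∫ x in Ioc 0 T, x ^ (-η) ∂μ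
        ≤ (n:ℝ) / Real.sqrt k * ((k:ℝ)/n * (T ^ (1 - η) / (1 - η))) :=
          mul_le_mul_of_nonneg_left hIb (by positivity)
      _ = (1 / (1 - η)) * lam ^ (1 - 1/η) * (k : ℝ) ^ (1 - 1/(2*η)) := harr
  · have hexp : 1 - 1/(2*η) < 0 := by
      rw [sub_neg]
      rw [lt_div_iff₀ (by linarith)]
      linarith
    have h1 : Tendsto (fun x : ℝ => x ^ (1 - 1/(2*η))) atTop (nhds 0) := by
      have := tendsto_rpow_neg_atTop (y := -(1 - 1/(2*η))) (by linarith)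
      simpa using this
    have h2 : Tendsto (fun k : ℕ => ((k : ℝ)) ^ (1 - 1/(2*η))) atTop (nhds 0) :=
      h1.comp tendsto_natCast_atTop_atTop
    have h3 := h2.const_mul ((1 / (1 - η)) * lam ^ (1 - 1/η))
    simpa [mul_assoc] using h3
end
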